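/- arXiv:math/9909142 — 2 statements merged into one kernel-verified Lean document; each statement's English description precedes it below -/
import Mathlib

section
/- Existence of a finitely generated field of definition for a spanning set of invariants: Let k be an algebraically closed field of characteristic zero and K an algebraically closed field extension of k of infinite transcendence degree over k. Let R be a finitely generated commutative K-algebra equipped with a continuous semilinear action of Aut(K/k). Then there exists an intermediate field L of K/k, finitely generated over k, such that the subring R₁ of R consisting of the elements fixed by every σ ∈ Aut(K/k) that fixes L pointwise spans R as a K-vector space. -/
/-! Each of the finitely many algebra generators of `R` is fixed by the automorphisms fixing some
finitely generated field; the compositum `L` of these fields works for all generators at once.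
The elements fixed by the automorphisms fixing `L` form a multiplicative submonoid, so their
`K`-span is a `K`-subalgebra; it contains the generators, hence is all of `R`. -/

theorem Algebra.span_submonoid_eq_top {K R : Type*} [CommSemiring K] [Semiring R] [Algebra K R]
    {s : Set R} (hs : Algebra.adjoin K s = ⊤) {M : Submonoid R} (hsM : s ⊆ M) :
    Submodule.span K (M : Set R) = ⊤ := by
  rw [← M.closure_eq, ← Algebra.adjoin_eq_span, Algebra.toSubmodule_eq_top, ← top_le_iff, ← hs]
  exact Algebra.adjoin_mono hsM

section FixedSubmonoid

variable {G R : Type*} [Group G] [Semiring R]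

def fixedSubmonoid (φ : G →* (R ≃+* R)) (H : Subgroup G) : Submonoid R where
  carrier := {r | ∀ σ ∈ H, φ σ r = r}
  one_mem' σ _ := map_one (φ σ)
  mul_mem' {a b} ha hb σ hσ := by rw [map_mul, ha σ hσ, hb σ hσ]

theorem fixedSubmonoid_antitone (φ : G →* (R ≃+* R)) : Antitone (fixedSubmonoid φ) :=
  fun _ _ hH _ hr σ hσ ↦ hr σ (hH hσ)

end FixedSubmonoid

theorem IntermediateField.mem_fixedSubmonoid_fixingSubgroup_iff {k K R : Type*} [Field k]
    [Field K] [Algebra k K] [Semiring R] (φ : (K ≃ₐ[k] K) →* (R ≃+* R))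
    {L : IntermediateField k K} {r : R} :
    r ∈ fixedSubmonoid φ L.fixingSubgroup ↔ ∀ σ : K ≃ₐ[k] K, (∀ x ∈ L, σ x = x) → φ σ r = r := by
  simp [fixedSubmonoid]

theorem IntermediateField.exists_fg_subset_fixedSubmonoid {k K R : Type*} [Field k] [Field K]
    [Algebra k K] [Semiring R] (φ : (K ≃ₐ[k] K) →* (R ≃+* R)) {s : Set R} (hs : s.Finite)
    (hfix : ∀ r ∈ s, ∃ L : IntermediateField k K, L.FG ∧ r ∈ fixedSubmonoid φ L.fixingSubgroup) :
    ∃ L : IntermediateField k K, L.FG ∧ s ⊆ fixedSubmonoid φ L.fixingSubgroup := by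
  choose f hfFG hf using hfix
  have := hs.to_subtype
  refine ⟨⨆ r : s, f r r.2, IntermediateField.fg_iSup fun r ↦ hfFG r r.2, fun r hr ↦ ?_⟩
  exact fixedSubmonoid_antitone φ (fixingSubgroup_antitone (le_iSup (fun r : s ↦ f r r.2) ⟨r, hr⟩))
    (hf r hr)

theorem exists_fg_field_of_definition_of_spanning_invariants_general
    (k K : Type) [Field k] [Field K] [Algebra k K]
    (R : Type) [CommRing R] [Algebra K R]
    -- `R` is a finitely generated `K`-algebra
    (hfg : Algebra.FiniteType K R)
    -- a semilinear action of `Aut(K/k)` on `R`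
    (φ : (K ≃ₐ[k] K) →* (R ≃+* R))
    -- continuity of the action
    (hcont : ∀ r : R, ∃ L : IntermediateField k K, L.FG ∧
      ∀ σ : K ≃ₐ[k] K, (∀ x ∈ L, σ x = x) → φ σ r = r) :
    -- there is a finitely generated intermediate field `L` such that the elements fixed by
    -- every automorphism fixing `L` pointwise span `R` over `K`
    ∃ L : IntermediateField k K, L.FG ∧
      Submodule.span K
        {r : R | ∀ σ : K ≃ₐ[k] K, (∀ x ∈ L, σ x = x) → φ σ r = r} = ⊤ := by
  obtain ⟨s, hs⟩ := hfg.out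
  simp_rw [← IntermediateField.mem_fixedSubmonoid_fixingSubgroup_iff φ] at hcont ⊢
  obtain ⟨L, hL, hsL⟩ :=
    IntermediateField.exists_fg_subset_fixedSubmonoid φ s.finite_toSet fun r _ ↦ hcont r
  exact ⟨L, hL, Algebra.span_submonoid_eq_top hs hsL⟩

/-- Existence of a finitely generated field of definition for a spanning set of
invariants. -/
theorem exists_fg_field_of_definition_of_spanning_invariants
    (k K : Type) [Field k] [CharZero k] [IsAlgClosed k] [Field K] [IsAlgClosed K] [Algebra k K]
    -- `K` has infinite transcendence degree over `k`
    (htr : ∀ L : IntermediateField k K, L.FG → ∃ x : K, Transcendental L x)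
    (R : Type) [CommRing R] [Algebra K R]
    -- `R` is a finitely generated `K`-algebra
    (hfg : Algebra.FiniteType K R)
    -- a semilinear action of `Aut(K/k)` on `R`
    (φ : (K ≃ₐ[k] K) →* (R ≃+* R))
    (hsemi : ∀ (σ : K ≃ₐ[k] K) (c : K) (r : R),
      φ σ (algebraMap K R c * r) = algebraMap K R (σ c) * φ σ r)
    -- continuity of the action
    (hcont : ∀ r : R, ∃ L : IntermediateField k K, L.FG ∧
      ∀ σ : K ≃ₐ[k] K, (∀ x ∈ L, σ x = x) → φ σ r = r) :
    -- there is a finitely generated intermediate field `L` such that the elements fixed by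
    -- every automorphism fixing `L` pointwise span `R` over `K`
    ∃ L : IntermediateField k K, L.FG ∧
      Submodule.span K
        {r : R | ∀ σ : K ≃ₐ[k] K, (∀ x ∈ L, σ x = x) → φ σ r = r} = ⊤ :=
  exists_fg_field_of_definition_of_spanning_invariants_general k K R hfg φ hcont
end

section
/- Eventually trivial transition maps in an inverse system of finite groups with trivial limit: Let I be a nonempty directed partially ordered set and let (G_i)_{i ∈ I}, together with transition group homomorphisms g_{ji} : G_j → G_i for all i ≤ j satisfying g_{ii} = id and g_{ji} ∘ g_{kj} = g_{ki} for i ≤ j ≤ k, be an inverse system of finite groups. If the inverse limit of the system — the group of all families (x_i)_{i ∈ I} with x_i ∈ G_i and g_{ji}(x_j) = x_i for all i ≤ j — is the trivial group, then for every i ∈ I there exists j ∈ I with j ≥ i such that the transition homomorphism g_{ji} : G_j → G_i has trivial image. -/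
open CategoryTheory Opposite

/-- In a directed inverse system of finite groups with trivial inverse limit,
every index admits a larger index for which the transition homomorphism has trivial image. -/
theorem inverse_system_trivial_limit_eventually_trivial_transition
    (I : Type) [PartialOrder I] [Nonempty I] [IsDirected I (· ≤ ·)]
    (G : I → Type) [∀ i, Group (G i)] [∀ i, Finite (G i)]
    (g : ∀ {i j : I}, i ≤ j → (G j →* G i))
    (hid : ∀ (i : I) (h : i ≤ i) (x : G i), g h x = x)
    (hcomp : ∀ {i j l : I} (hij : i ≤ j) (hjl : j ≤ l) (x : G l),
      g hij (g hjl x) = g (hij.trans hjl) x)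
    -- the inverse limit is the trivial group
    (htriv : ∀ x : ∀ i, G i, (∀ (i j : I) (h : i ≤ j), g h (x j) = x i) → ∀ i, x i = 1) :
    ∀ i : I, ∃ (j : I) (h : i ≤ j), ∀ y : G j, g h y = 1 := by
  intro i₀
  by_contra hcon
  push_neg at hcon
  -- For every j ≥ i₀ there is an element with nontrivial image in G i₀.
  have hne : ∀ (j : I) (h : i₀ ≤ j), ∃ y : G j, g h y ≠ 1 := hcon
  -- The sets of "everywhere liftable, nontrivially over i₀" elements.
  set T : ∀ i : I, Set (G i) := fun i =>
    { x | ∀ (j : I) (h : i ≤ j), ∃ y : G j, g h y = x ∧ ∀ (h' : i₀ ≤ j), g h' y ≠ 1 } with hT_def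
  -- stability under transition maps
  have hT : ∀ {i j : I} (h : i ≤ j), ∀ x ∈ T j, g h x ∈ T i := by
    intro i j h x hx k hik
    obtain ⟨m, hjm, hkm⟩ := directed_of (· ≤ ·) j k
    obtain ⟨y, hy1, hy2⟩ := hx m hjm
    refine ⟨g hkm y, ?_, ?_⟩
    · rw [hcomp hik hkm y, ← hy1, hcomp h hjm y]
    · intro h'
      rw [hcomp h' hkm y]
      exact hy2 _
  -- each T i is nonempty
  have hTne : ∀ i : I, (T i).Nonempty := by
    intro i
    set U : {j : I // i ≤ j} → Set (G i) := fun j =>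
      { x | ∃ y : G (j : I), g j.2 y = x ∧ ∀ (h' : i₀ ≤ (j : I)), g h' y ≠ 1 } with hU_def
    have hUne : ∀ j, (U j).Nonempty := by
      intro j
      by_cases hc : i₀ ≤ (j : I)
      · obtain ⟨y, hy⟩ := hne j hc
        exact ⟨g j.2 y, y, rfl, fun h' => hy⟩
      · exact ⟨g j.2 1, 1, rfl, fun h' => absurd h' hc⟩
    have hUdir : ∀ a b, ∃ c, U c ⊆ U a ∧ U c ⊆ U b := by
      intro a b
      obtain ⟨m, ham, hbm⟩ := directed_of (· ≤ ·) (a : I) (b : I)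
      refine ⟨⟨m, a.2.trans ham⟩, ?_, ?_⟩
      · rintro x ⟨y, hy1, hy2⟩
        refine ⟨g ham y, ?_, ?_⟩
        · rw [hcomp a.2 ham y]; exact hy1
        · intro h'; rw [hcomp h' ham y]; exact hy2 _
      · rintro x ⟨y, hy1, hy2⟩
        refine ⟨g hbm y, ?_, ?_⟩
        · rw [hcomp b.2 hbm y]; exact hy1
        · intro h'; rw [hcomp h' hbm y]; exact hy2 _
    -- the range of U has a minimal element
    have hfin : (Set.range U).Finite := Set.toFinite _
    have hrne : (Set.range U).Nonempty := ⟨U ⟨i, le_refl i⟩, ⟨_, rfl⟩⟩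
    obtain ⟨V, ⟨a₀, ha₀⟩, hmin⟩ : ∃ V ∈ Set.range U, ∀ V' ∈ Set.range U, id V' ≤ id V → id V = id V' := by
      obtain ⟨V, hV⟩ := hfin.exists_minimal hrne
      exact ⟨V, hV.1, fun V' h h' => le_antisymm (hV.2 h h') h'⟩
    have hsub : ∀ b, V ⊆ U b := by
      intro b
      obtain ⟨c, hca, hcb⟩ := hUdir a₀ b
      have : U c = V := by
        refine (hmin (U c) ⟨c, rfl⟩ ?_).symm
        rw [← ha₀]
        exact hca
      rw [← this]; exact hcb
    obtain ⟨x, hx⟩ := hUne a₀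
    rw [ha₀] at hx
    refine ⟨x, ?_⟩
    intro j h
    exact hsub ⟨j, h⟩ hx
  -- Build the functor of subtypes over Iᵒᵖ
  let F : Iᵒᵖ ⥤ Type := {
    obj := fun i => ↥(T i.unop)
    map := fun {i j} f => TypeCat.ofHom (fun x => ⟨g (leOfHom f.unop) x.1, hT _ _ x.2⟩)
    map_id := by
      intro i
      refine ConcreteCategory.hom_ext _ _ fun x => ?_
      apply Subtype.ext
      exact hid _ _ _
    map_comp := by
      intro i j k f h
      refine ConcreteCategory.hom_ext _ _ fun x => ?_
      apply Subtype.ext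
      exact (hcomp _ _ _).symm }
  haveI : ∀ i : Iᵒᵖ, Finite (F.obj i) := fun i => Subtype.finite
  haveI : ∀ i : Iᵒᵖ, Nonempty (F.obj i) := fun i => (hTne i.unop).to_subtype
  obtain ⟨s, hs⟩ := nonempty_sections_of_finite_inverse_system F
  set x : ∀ i, G i := fun i => (s (op i)).1 with hx_def
  have hcompat : ∀ (i j : I) (h : i ≤ j), g h (x j) = x i := by
    intro i j h
    have := hs (Quiver.Hom.op (homOfLE h) : op j ⟶ op i)
    exact congrArg Subtype.val this
  have hone : x i₀ = 1 := htriv x hcompat i₀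
  have hmem : x i₀ ∈ T i₀ := (s (op i₀)).2
  obtain ⟨y, hy1, hy2⟩ := hmem i₀ (le_refl i₀)
  rw [hid _ _ y] at hy1
  have := hy2 (le_refl i₀)
  rw [hid _ _ y, hy1, hone] at this
  exact this rfl
end
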